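/- Let σ ⊂ (0, ∞) be the set of numbers of the form |q·g(x) + p·f(x)| where x ranges over a compact interval I, (p, q) ranges over coprime integer pairs with f'(x)·p + g'(x)·q = 0, together with the single value 1, under the hypotheses: f, g ∈ C¹(I), bounds 1/A < f'g − fg' < A, |f'| < A, |g'| < A, (|1/f'| < A or |1/g'| < A pointwise covering I), and x ↦ f'(x)/(−g'(x)) injective. Then σ ∩ (0, L] is finite for every L > 0; in particular σ is discrete. -/
import Mathlib


open Set

/-- Discreteness of the period spectrum (Lemma `lemme_croissance_sigma`):
under the uniform bounds and injectivity of the slope function, the set `σ`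
of periods `|q·g(x) + p·f(x)|` (over `x` in a compact interval and coprime
`(p, q)` with `f'(x)·p + g'(x)·q = 0`), together with `1`, meets `(0, L]` in a
finite set for every `L > 0`; in particular `σ` is discrete. -/
theorem period_spectrum_discrete
    (a b : ℝ) (hab : a ≤ b)
    (f g : ℝ → ℝ) (hf : ContDiff ℝ 1 f) (hg : ContDiff ℝ 1 g)
    (A : ℝ) (hA : 0 < A)
    (hcontact : ∀ x ∈ Icc a b,
      1 / A < deriv f x * g x - f x * deriv g x ∧
      deriv f x * g x - f x * deriv g x < A)
    (hf' : ∀ x ∈ Icc a b, |deriv f x| < A)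
    (hg' : ∀ x ∈ Icc a b, |deriv g x| < A)
    (hcover : ∀ x ∈ Icc a b,
      (deriv f x ≠ 0 ∧ |1 / deriv f x| < A) ∨ (deriv g x ≠ 0 ∧ |1 / deriv g x| < A))
    (hinj : Set.InjOn (fun x => deriv f x / (-(deriv g x))) (Icc a b)) :
    ∀ L : ℝ, 0 < L →
      ((({1} : Set ℝ) ∪
        {T : ℝ | ∃ x ∈ Icc a b, ∃ p q : ℤ, IsCoprime p q ∧
          deriv f x * (p : ℝ) + deriv g x * (q : ℝ) = 0 ∧
          T = |(q : ℝ) * g x + (p : ℝ) * f x|}) ∩ Set.Ioc 0 L).Finite := by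
  intro L hL
  -- slope is determined by (p,q)
  have key : ∀ x ∈ Icc a b, ∀ p q : ℤ, IsCoprime p q →
      deriv f x * (p : ℝ) + deriv g x * (q : ℝ) = 0 →
      deriv f x / (-(deriv g x)) = (q : ℝ) / (p : ℝ) := by
    intro x hx p q hpq hrel
    by_cases hg0 : deriv g x = 0
    · have hf0 : deriv f x ≠ 0 := by
        rcases hcover x hx with ⟨h, _⟩ | ⟨h, _⟩
        · exact h
        · exact absurd hg0 h
      have hp : (p : ℝ) = 0 := by
        have h0 : deriv f x * (p : ℝ) = 0 := by rw [hg0] at hrel; linarith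
        exact (mul_eq_zero.mp h0).resolve_left hf0
      have hp' : p = 0 := by exact_mod_cast hp
      simp [hg0, hp']
    · have hp : (p : ℝ) ≠ 0 := by
        intro h
        have hp0 : p = 0 := by exact_mod_cast h
        subst hp0
        have hq : (q : ℝ) = 0 := by
          have h0 : deriv g x * (q : ℝ) = 0 := by
            simpa using hrel
          exact (mul_eq_zero.mp h0).resolve_left hg0
        have hq0 : q = 0 := by exact_mod_cast hq
        subst hq0
        exact not_isCoprime_zero_zero hpq
      rw [div_eq_div_iff (neg_ne_zero.mpr hg0) hp]
      linarith [hrel, mul_comm (deriv f x) (p : ℝ)]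
  set N : ℤ := ⌈A ^ 2 * L⌉ with hN
  set K : Set (ℤ × ℤ) := Set.Icc (-N) N ×ˢ Set.Icc (-N) N with hK
  have hKfin : K.Finite := (Set.finite_Icc _ _).prod (Set.finite_Icc _ _)
  set Tset : ℤ × ℤ → Set ℝ := fun pq =>
    {T : ℝ | ∃ x ∈ Icc a b, IsCoprime pq.1 pq.2 ∧
      deriv f x * (pq.1 : ℝ) + deriv g x * (pq.2 : ℝ) = 0 ∧
      T = |(pq.2 : ℝ) * g x + (pq.1 : ℝ) * f x|} with hTset
  have hTsub : ∀ pq, (Tset pq).Subsingleton := by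
    rintro ⟨p, q⟩ T1 ⟨x1, hx1, hc1, hr1, hT1⟩ T2 ⟨x2, hx2, hc2, hr2, hT2⟩
    have hs1 := key x1 hx1 p q hc1 hr1
    have hs2 := key x2 hx2 p q hc2 hr2
    have : x1 = x2 := hinj hx1 hx2 (by simp only []; rw [hs1, hs2])
    rw [hT1, hT2, this]
  have hUfin : (⋃ pq ∈ K, Tset pq).Finite :=
    hKfin.biUnion fun pq _ => (hTsub pq).finite
  apply Set.Finite.subset (hUfin.insert 1)
  rintro T ⟨hT, hT0, hTL⟩
  rcases hT with hT1 | ⟨x, hx, p, q, hpq, hrel, hTval⟩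
  · exact Or.inl hT1
  · right
    -- bounds on p, q
    obtain ⟨hD1, hD2⟩ := hcontact x hx
    set D := deriv f x * g x - f x * deriv g x with hD
    set s := (q : ℝ) * g x + (p : ℝ) * f x with hs
    have hsL : |s| ≤ L := by rw [← hTval]; exact hTL
    have hpD : (p : ℝ) * D = -(deriv g x * s) := by
      rw [hD, hs]; linear_combination (g x) * hrel
    have hqD : (q : ℝ) * D = deriv f x * s := by
      rw [hD, hs]; linear_combination (-(f x)) * hrel
    have hDpos : 1 / A < |D| := lt_of_lt_of_le hD1 (le_abs_self D)
    have hA1 : (0:ℝ) < 1 / A := by positivity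
    have hpabs : |(p : ℝ)| * |D| = |deriv g x| * |s| := by
      rw [← abs_mul, ← abs_mul, hpD, abs_neg]
    have hqabs : |(q : ℝ)| * |D| = |deriv f x| * |s| := by
      rw [← abs_mul, ← abs_mul, hqD]
    have hgx := hg' x hx
    have hfx := hf' x hx
    have hbound : ∀ r : ℝ, |r| * |D| ≤ A * L → |r| ≤ A ^ 2 * L := by
      intro r hr
      have h2 : |r| * (1 / A) ≤ A * L :=
        le_trans (mul_le_mul_of_nonneg_left hDpos.le (abs_nonneg _)) hr
      calc |r| = |r| * (1 / A) * A := by field_simp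
        _ ≤ A * L * A := mul_le_mul_of_nonneg_right h2 hA.le
        _ = A ^ 2 * L := by ring
    have hpM : |(p : ℝ)| ≤ A ^ 2 * L := by
      refine hbound _ ?_
      rw [hpabs]
      exact mul_le_mul hgx.le hsL (abs_nonneg _) hA.le
    have hqM : |(q : ℝ)| ≤ A ^ 2 * L := by
      refine hbound _ ?_
      rw [hqabs]
      exact mul_le_mul hfx.le hsL (abs_nonneg _) hA.le
    have hmem : (p, q) ∈ K := by
      constructor <;> simp only [Set.mem_Icc] <;> constructor
      · have : (-N : ℝ) ≤ p := by
          have h1 : (A ^ 2 * L : ℝ) ≤ (N : ℝ) := Int.le_ceil _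
          have := neg_abs_le (p : ℝ)
          push_cast; linarith
        exact_mod_cast this
      · have : (p : ℝ) ≤ (N : ℝ) := le_trans (le_abs_self _) (le_trans hpM (Int.le_ceil _))
        exact_mod_cast this
      · have : (-N : ℝ) ≤ q := by
          have h1 : (A ^ 2 * L : ℝ) ≤ (N : ℝ) := Int.le_ceil _
          have := neg_abs_le (q : ℝ)
          push_cast; linarith
        exact_mod_cast this
      · have : (q : ℝ) ≤ (N : ℝ) := le_trans (le_abs_self _) (le_trans hqM (Int.le_ceil _))
        exact_mod_cast this
    exact Set.mem_biUnion hmem ⟨x, hx, hpq, hrel, hTval⟩
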